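/- Every normed A-bimodule X over a C*-algebra A contains a largest aperiodic A-subbimodule, namely the closed linear span of all aperiodic A-subbimodules of X. -/

import Mathlib

open scoped ComplexOrder ComplexInnerProductSpace
open Filter Topology

noncomputable section

section Hereditary

variable {A : Type*} [NonUnitalNormedRing A] [StarRing A] [Module ℂ A] [PartialOrder A]

/-- A hereditary subalgebra of a C*-algebra. -/
def IsHereditary (D : NonUnitalStarSubalgebra ℂ A) : Prop :=
  ∀ a d : A, d ∈ D → 0 ≤ a → a ≤ d → a ∈ D

/-- A non-zero, closed, hereditary C*-subalgebra. -/
def NontrivClosedHereditary (D : NonUnitalStarSubalgebra ℂ A) : Prop :=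
  IsClosed (D : Set A) ∧ (∃ d ∈ D, d ≠ 0) ∧ IsHereditary D

end Hereditary

section Bim

variable (A X : Type*) [NormedRing A] [NormedAlgebra ℂ A]
  [NormedAddCommGroup X] [NormedSpace ℂ X]

/-- A normed `A`-bimodule structure on the normed space `X`. -/
structure NormedBimoduleStr where
  lsmul : A → X → X
  rsmul : X → A → X
  lsmul_add : ∀ a x y, lsmul a (x + y) = lsmul a x + lsmul a y
  add_lsmul : ∀ a b x, lsmul (a + b) x = lsmul a x + lsmul b x
  lsmul_smulc : ∀ (c : ℂ) a x, lsmul a (c • x) = c • lsmul a x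
  rsmul_add : ∀ x y a, rsmul (x + y) a = rsmul x a + rsmul y a
  add_rsmul : ∀ x a b, rsmul x (a + b) = rsmul x a + rsmul x b
  rsmul_smulc : ∀ (c : ℂ) x a, rsmul (c • x) a = c • rsmul x a
  lsmul_mul : ∀ a b x, lsmul (a * b) x = lsmul a (lsmul b x)
  rsmul_mul : ∀ x a b, rsmul x (a * b) = rsmul (rsmul x a) b
  lsmul_rsmul : ∀ a x b, rsmul (lsmul a x) b = lsmul a (rsmul x b)
  norm_lsmul_le : ∀ a x, ‖lsmul a x‖ ≤ ‖a‖ * ‖x‖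
  norm_rsmul_le : ∀ x a, ‖rsmul x a‖ ≤ ‖x‖ * ‖a‖

variable {A X} [StarRing A] [PartialOrder A]

/-- Kishimoto's condition for an element of a normed `A`-bimodule. -/
def KishimotoBim (M : NormedBimoduleStr A X) (x : X) : Prop :=
  ∀ D : NonUnitalStarSubalgebra ℂ A, NontrivClosedHereditary D →
    ∀ ε : ℝ, 0 < ε → ∃ a ∈ D, 0 ≤ a ∧ ‖a‖ = 1 ∧ ‖M.lsmul a (M.rsmul x a)‖ < ε

/-- Aperiodicity of a normed `A`-bimodule. -/
def AperiodicBim (M : NormedBimoduleStr A X) : Prop := ∀ x : X, KishimotoBim M x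

/-- An `A`-subbimodule of a normed `A`-bimodule. -/
def IsSubBimoduleX (M : NormedBimoduleStr A X) (S : Submodule ℂ X) : Prop :=
  ∀ (a : A), ∀ x ∈ S, M.lsmul a x ∈ S ∧ M.rsmul x a ∈ S

end Bim

/-!
The Kishimoto condition cuts out a closed linear subspace of `X`, so the closure of the span of
all aperiodic subbimodules is again aperiodic; it is a subbimodule because left and right
multiplication are continuous.

The only real work is closure under addition. Given `x`, `y` and `D`, pick `a ∈ D` with `‖a x a‖`
small and put `e = min (2a) 1`, which factors as `e = u a = a u` with `‖u‖ ≤ 2`. The elements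
`b` with `e b = b = b e` form a closed hereditary subalgebra, non-zero because it contains
`(a - 1/2)₊` (here `‖a‖ = 1` is used). Choosing such a `b` of norm one with `‖b y b‖` small gives
`b ≤ e² ≤ 2a`, so `b ∈ D`, and `‖b x b‖ = ‖b (e x e) b‖ ≤ ‖u (a x a) u‖ ≤ 4 ‖a x a‖`.
-/

namespace NormedBimoduleStr

variable {A X : Type*} [NormedRing A] [NormedAddCommGroup X] [NormedSpace ℂ X]
  (M : NormedBimoduleStr A X)

def lsmulCLM (a : A) : X →L[ℂ] X :=
  LinearMap.mkContinuous
    { toFun := M.lsmul a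
      map_add' := M.lsmul_add a
      map_smul' := fun c x => M.lsmul_smulc c a x } ‖a‖ (M.norm_lsmul_le a)

def rsmulCLM (a : A) : X →L[ℂ] X :=
  LinearMap.mkContinuous
    { toFun := fun x => M.rsmul x a
      map_add' := fun x y => M.rsmul_add x y a
      map_smul' := fun c x => M.rsmul_smulc c x a } ‖a‖
    (fun x => (M.norm_rsmul_le x a).trans_eq (mul_comm _ _))

def sandwich (a : A) : X →L[ℂ] X := M.lsmulCLM a ∘L M.rsmulCLM a

lemma sandwich_apply (a : A) (x : X) : M.sandwich a x = M.lsmul a (M.rsmul x a) := rfl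

lemma norm_sandwich_le (a : A) (x : X) : ‖M.sandwich a x‖ ≤ ‖a‖ ^ 2 * ‖x‖ :=
  calc ‖M.lsmul a (M.rsmul x a)‖ ≤ ‖a‖ * (‖x‖ * ‖a‖) :=
        (M.norm_lsmul_le _ _).trans (by gcongr; exact M.norm_rsmul_le x a)
    _ = ‖a‖ ^ 2 * ‖x‖ := by ring

lemma sandwich_sandwich (a b : A) (x : X) :
    M.sandwich a (M.sandwich b x) = M.lsmul (a * b) (M.rsmul x (b * a)) := by
  simp only [sandwich_apply, M.lsmul_mul, M.rsmul_mul, M.lsmul_rsmul]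

end NormedBimoduleStr

lemma mul_eq_zero_of_nonneg_of_le_of_mul_eq_zero {A : Type*} [NonUnitalCStarAlgebra A]
    [PartialOrder A] [StarOrderedRing A] {a d s : A} (ha : 0 ≤ a) (had : a ≤ d)
    (hds : d * s = 0) : a * s = 0 := by
  have hconj : star s * a * s = 0 := le_antisymm
    (by simpa [mul_assoc, hds] using star_left_conjugate_le_conjugate had s)
    (star_left_conjugate_nonneg ha s)
  have hsqrt : CFC.sqrt a * s = 0 := by
    rw [← norm_eq_zero, ← sq_eq_zero_iff, ← CFC.norm_star_mul_mul_self_of_nonneg s ha, hconj,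
      norm_zero]
  rw [← CFC.sqrt_mul_sqrt_self a ha, mul_assoc, hsqrt, mul_zero]

section LocalUnit

variable {A : Type*} [CStarAlgebra A]

namespace IsSelfAdjoint

variable {e : A} (he : IsSelfAdjoint e)
def localUnitSubalgebra : NonUnitalStarSubalgebra ℂ A where
  carrier := {b | e * b = b ∧ b * e = b}
  add_mem' := by
    rintro p q ⟨hp₁, hp₂⟩ ⟨hq₁, hq₂⟩
    exact ⟨by rw [mul_add, hp₁, hq₁], by rw [add_mul, hp₂, hq₂]⟩
  zero_mem' := by simp
  mul_mem' := by
    rintro p q ⟨hp₁, -⟩ ⟨-, hq₂⟩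
    exact ⟨by rw [← mul_assoc, hp₁], by rw [mul_assoc, hq₂]⟩
  smul_mem' := by
    rintro c p ⟨hp₁, hp₂⟩
    exact ⟨by rw [mul_smul_comm, hp₁], by rw [smul_mul_assoc, hp₂]⟩
  star_mem' := by
    rintro p ⟨hp₁, hp₂⟩
    exact ⟨by rw [← he.star_eq, ← star_mul, hp₂], by rw [← he.star_eq, ← star_mul, hp₁]⟩

lemma isClosed_localUnitSubalgebra : IsClosed (he.localUnitSubalgebra : Set A) :=
  (isClosed_eq (by fun_prop) (by fun_prop)).inter (isClosed_eq (by fun_prop) (by fun_prop))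

variable [PartialOrder A] [StarOrderedRing A]

lemma isHereditary_localUnitSubalgebra : IsHereditary he.localUnitSubalgebra := by
  rintro b d ⟨-, hde⟩ hb hbd
  have hbe : b * e = b := by
    have := mul_eq_zero_of_nonneg_of_le_of_mul_eq_zero hb hbd (s := 1 - e)
      (by rw [mul_sub, mul_one, hde, sub_self])
    rwa [mul_sub, mul_one, sub_eq_zero, eq_comm] at this
  refine ⟨?_, hbe⟩
  simpa [hb.star_eq, he.star_eq] using congr(star $hbe)

lemma le_mul_self_of_mem_localUnitSubalgebra {b : A} (hb : b ∈ he.localUnitSubalgebra)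
    (hb₀ : 0 ≤ b) (hb₁ : ‖b‖ ≤ 1) : b ≤ e * e :=
  calc b = e * b * e := by rw [hb.1, hb.2]
    _ ≤ e * 1 * e := by
      simpa [he.star_eq] using star_left_conjugate_le_conjugate
        ((CStarAlgebra.norm_le_one_iff_of_nonneg b hb₀).1 hb₁) e
    _ = e * e := by rw [mul_one]

end IsSelfAdjoint

variable [PartialOrder A] [StarOrderedRing A]

lemma NonUnitalStarSubalgebra.exists_nonneg_norm_eq_one {D : NonUnitalStarSubalgebra ℂ A}
    (hD : ∃ d ∈ D, d ≠ 0) : ∃ a ∈ D, 0 ≤ a ∧ ‖a‖ = 1 := by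
  obtain ⟨d, hdD, hd⟩ := hD
  have hp : ‖star d * d‖ ≠ 0 := by simpa [CStarRing.norm_star_mul_self] using hd
  refine ⟨‖star d * d‖⁻¹ • (star d * d), ?_,
    smul_nonneg (by positivity) (star_mul_self_nonneg d), ?_⟩
  · rw [← Complex.coe_smul]
    exact SMulMemClass.smul_mem _ (mul_mem (star_mem hdD) hdD)
  · rw [norm_smul, norm_inv, norm_norm, inv_mul_cancel₀ hp]

end LocalUnit

section Cutoff

variable {A : Type*} [CStarAlgebra A] {a : A}

def cutoff (a : A) : A := cfc (fun t : ℝ => min (2 * t) 1) a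

def cutoffQuotient (a : A) : A := cfc (fun t : ℝ => (max t (1 / 2))⁻¹) a

def upperPart (a : A) : A := cfc (fun t : ℝ => max (t - 1 / 2) 0) a

lemma isSelfAdjoint_cutoff (a : A) : IsSelfAdjoint (cutoff a) := cfc_predicate _ a

lemma norm_cutoffQuotient_le (a : A) : ‖cutoffQuotient a‖ ≤ 2 := by
  refine norm_cfc_le zero_le_two fun t _ => ?_
  rw [norm_inv, Real.norm_of_nonneg (by positivity)]
  exact inv_le_of_inv_le₀ (by norm_num) (by norm_num)

lemma cutoffQuotient_mul (ha : IsSelfAdjoint a) : cutoffQuotient a * a = cutoff a := by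
  have hmul := cfc_mul (fun t : ℝ => (max t (1 / 2))⁻¹) (fun t => t) a
    ((continuous_id.max continuous_const).continuousOn.inv₀
      fun t _ => (lt_max_of_lt_right one_half_pos).ne')
  rw [cfc_id' ℝ a] at hmul
  rw [cutoffQuotient, ← hmul, cutoff]
  refine cfc_congr fun t _ => ?_
  rcases le_total t (1 / 2) with ht | ht
  · simp only [max_eq_right ht, min_eq_left (by linarith : 2 * t ≤ 1)]
    ring
  · simp only [max_eq_left ht, min_eq_right (by linarith : 1 ≤ 2 * t)]
    exact inv_mul_cancel₀ (by linarith)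

lemma mul_cutoffQuotient (ha : IsSelfAdjoint a) : a * cutoffQuotient a = cutoff a := by
  have hu : IsSelfAdjoint (cutoffQuotient a) := cfc_predicate _ a
  simpa [ha.star_eq, hu.star_eq, (isSelfAdjoint_cutoff a).star_eq] using
    congr(star $(cutoffQuotient_mul ha))

lemma upperPart_mem_localUnitSubalgebra (a : A) :
    upperPart a ∈ (isSelfAdjoint_cutoff a).localUnitSubalgebra := by
  have hpointwise (t : ℝ) : min (2 * t) 1 * max (t - 1 / 2) 0 = max (t - 1 / 2) 0 := by
    rcases le_total t (1 / 2) with ht | ht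
    · rw [max_eq_right (by linarith), mul_zero]
    · rw [min_eq_right (by linarith), one_mul]
  constructor
  · exact (cfc_mul _ _ a).symm.trans (cfc_congr fun t _ => hpointwise t)
  · exact (cfc_mul _ _ a).symm.trans
      (cfc_congr fun t _ => (mul_comm _ _).trans (hpointwise t))

variable [PartialOrder A] [StarOrderedRing A]

lemma cutoff_mul_self_le (ha : 0 ≤ a) : cutoff a * cutoff a ≤ a + a :=
  calc cutoff a * cutoff a = cfc (fun t : ℝ => min (2 * t) 1 * min (2 * t) 1) a :=
        (cfc_mul _ _ a).symm
    _ ≤ cfc (fun t : ℝ => t + t) a := cfc_mono fun t ht => by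
        have ht₀ : 0 ≤ t := spectrum_nonneg_of_nonneg ha ht
        nlinarith [min_le_left (2 * t) 1, min_le_right (2 * t) 1,
          le_min (by linarith : 0 ≤ 2 * t) zero_le_one]
    _ = a + a := by rw [cfc_add .., cfc_id' ℝ a]

lemma upperPart_ne_zero (ha₀ : 0 ≤ a) (ha : 1 / 2 < ‖a‖) : upperPart a ≠ 0 := by
  intro h
  have : Nontrivial A := ⟨⟨a, 0, by rintro rfl; norm_num at ha⟩⟩
  have hzero := eqOn_of_cfc_eq_cfc (h.trans (cfc_zero ℝ a).symm)
  have := hzero (CStarAlgebra.norm_mem_spectrum_of_nonneg ha₀)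
  simp at this
  linarith

lemma nontrivClosedHereditary_localUnitSubalgebra_cutoff (ha₀ : 0 ≤ a) (ha : 1 / 2 < ‖a‖) :
    NontrivClosedHereditary (isSelfAdjoint_cutoff a).localUnitSubalgebra :=
  ⟨(isSelfAdjoint_cutoff a).isClosed_localUnitSubalgebra,
    ⟨upperPart a, upperPart_mem_localUnitSubalgebra a, upperPart_ne_zero ha₀ ha⟩,
    (isSelfAdjoint_cutoff a).isHereditary_localUnitSubalgebra⟩

end Cutoff

section Kishimoto

variable {A X : Type*} [NormedAddCommGroup X] [NormedSpace ℂ X]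

section NormedRing

variable [NormedRing A] [NormedAlgebra ℂ A] [StarRing A] [PartialOrder A]
  (M : NormedBimoduleStr A X)

lemma kishimotoBim_iff {x : X} :
    KishimotoBim M x ↔ ∀ D : NonUnitalStarSubalgebra ℂ A, NontrivClosedHereditary D →
      ∀ ε : ℝ, 0 < ε → ∃ a ∈ D, 0 ≤ a ∧ ‖a‖ = 1 ∧ ‖M.sandwich a x‖ < ε :=
  Iff.rfl

variable {M}

lemma KishimotoBim.smul {x : X} (hx : KishimotoBim M x) (c : ℂ) : KishimotoBim M (c • x) := by
  rw [kishimotoBim_iff] at hx ⊢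
  intro D hD ε hε
  obtain ⟨a, haD, ha₀, ha₁, hax⟩ := hx D hD (ε / (‖c‖ + 1)) (by positivity)
  refine ⟨a, haD, ha₀, ha₁, ?_⟩
  calc ‖M.sandwich a (c • x)‖ = ‖c‖ * ‖M.sandwich a x‖ := by rw [map_smul, norm_smul]
    _ ≤ ‖c‖ * (ε / (‖c‖ + 1)) := by gcongr
    _ < ε := by
      rw [mul_div_assoc', div_lt_iff₀ (by positivity)]
      nlinarith

lemma isClosed_setOf_kishimotoBim : IsClosed {x : X | KishimotoBim M x} := by
  refine isClosed_of_closure_subset fun x hx => (kishimotoBim_iff M).2 fun D hD ε hε => ?_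
  obtain ⟨z, hz, hxz⟩ := Metric.mem_closure_iff.mp hx (ε / 2) (by positivity)
  obtain ⟨a, haD, ha₀, ha₁, haz⟩ := (kishimotoBim_iff M).1 hz D hD (ε / 2) (by positivity)
  refine ⟨a, haD, ha₀, ha₁, ?_⟩
  calc ‖M.sandwich a x‖ ≤ ‖M.sandwich a z‖ + ‖M.sandwich a (x - z)‖ := by
        simpa using norm_add_le (M.sandwich a z) (M.sandwich a (x - z))
    _ ≤ ‖M.sandwich a z‖ + ‖x - z‖ := by
        simpa [ha₁] using M.norm_sandwich_le a (x - z)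
    _ < ε := by rw [← dist_eq_norm]; linarith

end NormedRing

variable [CStarAlgebra A] [PartialOrder A] [StarOrderedRing A] (M : NormedBimoduleStr A X)

lemma kishimotoBim_zero : KishimotoBim M 0 := by
  intro D hD ε hε
  obtain ⟨a, haD, ha₀, ha₁⟩ := D.exists_nonneg_norm_eq_one hD.2.1
  exact ⟨a, haD, ha₀, ha₁, by simpa [← M.sandwich_apply] using hε⟩

variable {M}

lemma KishimotoBim.add {x y : X} (hx : KishimotoBim M x) (hy : KishimotoBim M y) :
    KishimotoBim M (x + y) := by
  rw [kishimotoBim_iff] at hx hy ⊢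
  intro D hD ε hε
  obtain ⟨a, haD, ha₀, ha₁, hax⟩ := hx D hD (ε / 8) (by positivity)
  have he := isSelfAdjoint_cutoff a
  obtain ⟨b, hbe, hb₀, hb₁, hby⟩ := hy he.localUnitSubalgebra
    (nontrivClosedHereditary_localUnitSubalgebra_cutoff ha₀ (by rw [ha₁]; norm_num))
    (ε / 2) (by positivity)
  have hbD : b ∈ D := hD.2.2 b (a + a) (add_mem haD haD) hb₀
    ((he.le_mul_self_of_mem_localUnitSubalgebra hbe hb₀ hb₁.le).trans (cutoff_mul_self_le ha₀))
  refine ⟨b, hbD, hb₀, hb₁, ?_⟩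
  have hbx : ‖M.sandwich b x‖ < ε / 2 :=
    calc ‖M.sandwich b x‖ = ‖M.sandwich b (M.sandwich (cutoff a) x)‖ := by
          rw [M.sandwich_sandwich, hbe.2, hbe.1, M.sandwich_apply]
      _ ≤ ‖M.sandwich (cutoff a) x‖ := by simpa [hb₁] using M.norm_sandwich_le b _
      _ = ‖M.sandwich (cutoffQuotient a) (M.sandwich a x)‖ := by
          rw [M.sandwich_sandwich, cutoffQuotient_mul ha₀.isSelfAdjoint,
            mul_cutoffQuotient ha₀.isSelfAdjoint, M.sandwich_apply]
      _ ≤ 2 ^ 2 * ‖M.sandwich a x‖ := (M.norm_sandwich_le _ _).trans (by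
          gcongr; exact norm_cutoffQuotient_le a)
      _ < ε / 2 := by linarith
  calc ‖M.sandwich b (x + y)‖ ≤ ‖M.sandwich b x‖ + ‖M.sandwich b y‖ := by
        simpa using norm_add_le (M.sandwich b x) (M.sandwich b y)
    _ < ε := by linarith

variable (M)

def kishimotoSubmodule : Submodule ℂ X where
  carrier := {x | KishimotoBim M x}
  add_mem' := KishimotoBim.add
  zero_mem' := kishimotoBim_zero M
  smul_mem' c _ hx := hx.smul c

end Kishimoto

section SubBimodule

variable {A X : Type*} [NormedRing A] [NormedAddCommGroup X] [NormedSpace ℂ X]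
  {M : NormedBimoduleStr A X}

lemma isSubBimoduleX_sSup {𝒯 : Set (Submodule ℂ X)} (h𝒯 : ∀ T ∈ 𝒯, IsSubBimoduleX M T) :
    IsSubBimoduleX M (sSup 𝒯) := by
  intro a x hx
  have hmap (f : X →ₗ[ℂ] X) (hf : ∀ T ∈ 𝒯, ∀ y ∈ T, f y ∈ T) : f x ∈ sSup 𝒯 :=
    sSup_le (a := (sSup 𝒯).comap f) (fun T hT y hy => le_sSup hT (hf T hT y hy)) hx
  exact ⟨hmap (M.lsmulCLM a) fun T hT y hy => (h𝒯 T hT a y hy).1,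
    hmap (M.rsmulCLM a) fun T hT y hy => (h𝒯 T hT a y hy).2⟩

lemma IsSubBimoduleX.topologicalClosure {S : Submodule ℂ X} (hS : IsSubBimoduleX M S) :
    IsSubBimoduleX M S.topologicalClosure := fun a _ hx =>
  ⟨map_mem_closure (f := M.lsmulCLM a) (M.lsmulCLM a).continuous hx fun y hy =>
      (hS a y hy).1,
    map_mem_closure (f := M.rsmulCLM a) (M.rsmulCLM a).continuous hx fun y hy =>
      (hS a y hy).2⟩

end SubBimodule

/-- every normed `A`-bimodule contains a largest aperiodic `A`-subbimodule,
namely the closed linear span of all aperiodic `A`-subbimodules. -/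
theorem exists_largest_aperiodic_subbimodule
    {A X : Type*} [NormedRing A] [StarRing A] [CStarRing A] [NormedAlgebra ℂ A]
    [StarModule ℂ A] [PartialOrder A] [StarOrderedRing A] [CompleteSpace A]
    [NormedAddCommGroup X] [NormedSpace ℂ X] (M : NormedBimoduleStr A X) :
    ∃ S : Submodule ℂ X, IsSubBimoduleX M S ∧ (∀ x ∈ S, KishimotoBim M x) ∧
      (∀ T : Submodule ℂ X, IsSubBimoduleX M T → (∀ x ∈ T, KishimotoBim M x) → T ≤ S) ∧
      S = (sSup {T : Submodule ℂ X |
        IsSubBimoduleX M T ∧ ∀ x ∈ T, KishimotoBim M x}).topologicalClosure := by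
  let _ : CStarAlgebra A := { ‹NormedRing A›, ‹StarRing A›, ‹CStarRing A›, ‹CompleteSpace A›,
    ‹NormedAlgebra ℂ A›, ‹StarModule ℂ A› with }
  set S₀ := sSup {T : Submodule ℂ X | IsSubBimoduleX M T ∧ ∀ x ∈ T, KishimotoBim M x}
  refine ⟨S₀.topologicalClosure, ?_, fun x hx => ?_, fun T hT hTK => ?_, rfl⟩
  · exact (isSubBimoduleX_sSup fun T hT => hT.1).topologicalClosure
  · exact S₀.topologicalClosure_minimal (t := kishimotoSubmodule M) (sSup_le fun _ hT => hT.2)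
      isClosed_setOf_kishimotoBim hx
  · exact (le_sSup (show T ∈ _ from ⟨hT, hTK⟩) : T ≤ S₀).trans S₀.le_topologicalClosure
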